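/- Let q ∈ [0,1], N ≥ 2, and let i_1, …, i_n ∈ {1, …, N−1} be indices such that the permutation X = s_{i_1} ∘ s_{i_2} ∘ ⋯ ∘ s_{i_n} has Coxeter length ℓ(X) = n, i.e. the word (i_1, …, i_n) is reduced. Then (π_{i_n} ∘ ⋯ ∘ π_{i_1})(δ_id) = δ_X: applying the operators π_{i_1}, …, π_{i_n} in order to the point mass at the identity yields the permutation X with probability one, regardless of q. -/

import Mathlib

open MeasureTheory
open scoped NNReal

/-- Equip the finite symmetric group `S_N` with the discrete (full) σ-algebra. -/
instance (N : ℕ) : MeasurableSpace (Equiv.Perm (Fin N)) := ⊤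

/-- The adjacent transposition `s_i` of `{1, …, N}` exchanging `i` and `i+1`
(for `1 ≤ i ≤ N−1`; positions in `Fin N` are 0-indexed, so `s_i` swaps the
0-indexed positions `i−1` and `i`). -/
def adjT (N : ℕ) (i : {i : ℕ // 1 ≤ i ∧ i < N}) : Equiv.Perm (Fin N) :=
  Equiv.swap ⟨i.1 - 1, by omega⟩ ⟨i.1, i.2.2⟩

/-- The operator `τ_i : η ↦ η ∘ s_i`, exchanging the entries in positions
`i` and `i+1`. -/
def tauP (N : ℕ) (i : {i : ℕ // 1 ≤ i ∧ i < N}) (η : Equiv.Perm (Fin N)) :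
    Equiv.Perm (Fin N) :=
  η * adjT N i

/-- The operator `σ_i : η ↦ η ∘ s_i` if `η(i) < η(i+1)` and `η ↦ η` otherwise,
sorting positions `i`, `i+1` into decreasing order. -/
def sigmaP (N : ℕ) (i : {i : ℕ // 1 ≤ i ∧ i < N}) (η : Equiv.Perm (Fin N)) :
    Equiv.Perm (Fin N) :=
  if η ⟨i.1 - 1, by omega⟩ < η ⟨i.1, i.2.2⟩ then η * adjT N i else η

/-- The Markov operator `π_i ν = q·(τ_i)_*ν + (1−q)·(σ_i)_*ν` on measures
on `S_N`. -/
noncomputable def piP (N : ℕ) (q : ℝ≥0) (i : {i : ℕ // 1 ≤ i ∧ i < N})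
    (ν : Measure (Equiv.Perm (Fin N))) : Measure (Equiv.Perm (Fin N)) :=
  q • ν.map (tauP N i) + (1 - q) • ν.map (sigmaP N i)

/-! The inversion number `#η.inversions` changes by exactly one under `η ↦ η * s_i`: it goes
up precisely when `η(i) < η(i+1)`, which is also precisely when `σ_i η = τ_i η`. Hence a word
of length `n` raises the inversion number by at most `n`, while removing descents one at a
time writes every `η` as a product of `#η.inversions` adjacent transpositions. So the product
of a reduced word of length `n` has exactly `n` inversions, every letter of the word is met at
an ascent, and there both branches of `π_i` move the current point mass to the same point. -/

open Finset

theorem Equiv.swap_apply_lt_swap_apply_iff_of_covBy {α : Type*} [LinearOrder α] {a b x y : α}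
    (hab : a ⋖ b) (hxy : ¬(x = a ∧ y = b)) (hyx : ¬(x = b ∧ y = a)) :
    swap a b x < swap a b y ↔ x < y := by
  have hlt : a < b := hab.lt
  have hle : ∀ c, c < b → c ≤ a := fun _ => hab.le_of_lt
  have hge : ∀ c, a < c → b ≤ c := fun _ => hab.ge_of_gt
  rw [swap_apply_def, swap_apply_def]
  split_ifs <;> grind

namespace Equiv.Perm

variable {α : Type*} [LinearOrder α] [Fintype α]

def inversions (η : Perm α) : Finset (α × α) :=
  {p | p.1 < p.2 ∧ η p.2 < η p.1}

@[simp]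
theorem mem_inversions {η : Perm α} {p : α × α} :
    p ∈ η.inversions ↔ p.1 < p.2 ∧ η p.2 < η p.1 := by
  simp [inversions]

@[simp]
theorem inversions_one : (1 : Perm α).inversions = ∅ := by
  ext p
  simpa using le_of_lt

theorem inversions_mul_swap_of_covBy {η : Perm α} {a b : α} (hab : a ⋖ b) (h : η a < η b) :
    (η * swap a b).inversions =
      insert (a, b) (η.inversions.map ((swap a b).prodCongr (swap a b)).toEmbedding) := by
  ext ⟨x, y⟩
  simp only [mem_inversions, mem_insert, mem_map_equiv, prodCongr_symm, symm_swap,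
    prodCongr_apply, Prod.map, Prod.mk.injEq, coe_mul, Function.comp_apply]
  by_cases hxy : x = a ∧ y = b
  · simp [hxy, hab.lt, h]
  by_cases hyx : x = b ∧ y = a
  · simp [hyx, hab.lt.not_gt, h.not_gt, hab.ne']
  rw [swap_apply_lt_swap_apply_iff_of_covBy hab hxy hyx]
  tauto

theorem card_inversions_mul_swap_of_lt {η : Perm α} {a b : α} (hab : a ⋖ b) (h : η a < η b) :
    #(η * swap a b).inversions = #η.inversions + 1 := by
  rw [inversions_mul_swap_of_covBy hab h, card_insert_of_notMem, card_map]
  simp [hab.lt.not_gt]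

theorem card_inversions_mul_swap_of_gt {η : Perm α} {a b : α} (hab : a ⋖ b) (h : η b < η a) :
    #(η * swap a b).inversions + 1 = #η.inversions := by
  simpa [mul_assoc] using (card_inversions_mul_swap_of_lt (η := η * swap a b) hab (by simpa)).symm

theorem lt_of_card_inversions_lt_card_inversions_mul_swap {η : Perm α} {a b : α} (hab : a ⋖ b)
    (h : #η.inversions < #(η * swap a b).inversions) : η a < η b := by
  refine (lt_or_gt_of_ne (η.injective.ne hab.ne)).resolve_right fun hba => ?_
  have := card_inversions_mul_swap_of_gt hab hba
  omega

theorem card_inversions_mul_swap_le {η : Perm α} {a b : α} (hab : a ⋖ b) :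
    #(η * swap a b).inversions ≤ #η.inversions + 1 := by
  rcases lt_or_gt_of_ne (η.injective.ne hab.ne) with h | h
  · exact (card_inversions_mul_swap_of_lt hab h).le
  · have := card_inversions_mul_swap_of_gt hab h
    omega

theorem exists_covBy_apply_lt_of_ne_one [LocallyFiniteOrder α] {η : Perm α} (hη : η ≠ 1) :
    ∃ a b, a ⋖ b ∧ η b < η a := by
  contrapose! hη
  have hmono : StrictMono η := (strictMono_iff_forall_covBy η).2 fun a b hab =>
    (hη a b hab).lt_of_ne (η.injective.ne hab.ne)
  exact DFunLike.coe_injective hmono.eq_id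

end Equiv.Perm

open Equiv Equiv.Perm Finset

variable {N : ℕ}

theorem covBy_adjT (i : {i : ℕ // 1 ≤ i ∧ i < N}) :
    (⟨i.1 - 1, by omega⟩ : Fin N) ⋖ ⟨i.1, i.2.2⟩ := by
  rw [Fin.covBy_iff, Nat.covBy_iff_add_one_eq]
  dsimp only
  omega

theorem exists_adjT_eq_swap {a b : Fin N} (hab : a ⋖ b) : ∃ i, adjT N i = swap a b := by
  rw [Fin.covBy_iff, Nat.covBy_iff_add_one_eq] at hab
  refine ⟨⟨b, by omega, b.2⟩, ?_⟩
  rw [adjT]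
  congr
  dsimp only
  omega

theorem card_inversions_mul_prod_adjT_le (η : Perm (Fin N))
    (v : List {i : ℕ // 1 ≤ i ∧ i < N}) :
    #(η * (v.map (adjT N)).prod).inversions ≤ #η.inversions + v.length := by
  induction v generalizing η with
  | nil => simp
  | cons i v ih =>
    have hi : #(η * adjT N i).inversions ≤ #η.inversions + 1 :=
      card_inversions_mul_swap_le (covBy_adjT i)
    rw [List.map_cons, List.prod_cons, ← mul_assoc, List.length_cons]
    have := ih (η * adjT N i)
    omega

theorem exists_list_map_adjT_prod_eq (η : Perm (Fin N)) :
    ∃ v : List {i : ℕ // 1 ≤ i ∧ i < N},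
      (v.map (adjT N)).prod = η ∧ v.length = #η.inversions := by
  by_cases hη : η = 1
  · exact ⟨[], by simp [hη]⟩
  obtain ⟨a, b, hab, hba⟩ := exists_covBy_apply_lt_of_ne_one hη
  obtain ⟨i, hi⟩ := exists_adjT_eq_swap hab
  have hcard := card_inversions_mul_swap_of_gt hab hba
  obtain ⟨v, hv, hlen⟩ := exists_list_map_adjT_prod_eq (η * adjT N i)
  refine ⟨v ++ [i], ?_, ?_⟩
  · simp [hv, hi, mul_assoc]
  · rw [List.length_append, hlen, hi, List.length_singleton, hcard]
termination_by #η.inversions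
decreasing_by rw [hi]; omega

theorem piP_dirac_of_lt {q : ℝ≥0} (hq : q ≤ 1) (i : {i : ℕ // 1 ≤ i ∧ i < N})
    {η : Perm (Fin N)} (h : η ⟨i.1 - 1, by omega⟩ < η ⟨i.1, i.2.2⟩) :
    piP N q i (Measure.dirac η) = Measure.dirac (η * adjT N i) := by
  rw [piP, Measure.map_dirac' measurable_from_top, Measure.map_dirac' measurable_from_top,
    tauP, sigmaP, if_pos h, ← add_smul, add_tsub_cancel_of_le hq, one_smul]

theorem foldl_piP_dirac_of_card_inversions {q : ℝ≥0} (hq : q ≤ 1)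
    (w : List {i : ℕ // 1 ≤ i ∧ i < N}) (η : Perm (Fin N))
    (h : #(η * (w.map (adjT N)).prod).inversions = #η.inversions + w.length) :
    w.foldl (fun ν i => piP N q i ν) (Measure.dirac η) =
      Measure.dirac (η * (w.map (adjT N)).prod) := by
  induction w generalizing η with
  | nil => simp
  | cons i w ih =>
    simp only [List.map_cons, List.prod_cons, ← mul_assoc, List.length_cons] at h ⊢
    have hle := card_inversions_mul_prod_adjT_le (η * adjT N i) w
    have hi : #(η * adjT N i).inversions ≤ #η.inversions + 1 :=
      card_inversions_mul_swap_le (covBy_adjT i)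
    have hup : #(η * adjT N i).inversions = #η.inversions + 1 := by omega
    have hasc : η ⟨i.1 - 1, by omega⟩ < η ⟨i.1, i.2.2⟩ :=
      lt_of_card_inversions_lt_card_inversions_mul_swap (covBy_adjT i)
        (by unfold adjT at hup; omega)
    rw [List.foldl_cons, piP_dirac_of_lt hq i hasc]
    exact ih _ (by omega)

theorem piP_reduced_word_dirac_general (q : ℝ≥0) (hq : q ≤ 1) (N : ℕ)
    (w : List {i : ℕ // 1 ≤ i ∧ i < N})
    (hred : ∀ v : List {i : ℕ // 1 ≤ i ∧ i < N},
      (v.map (adjT N)).prod = (w.map (adjT N)).prod → w.length ≤ v.length) :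
    w.foldl (fun ν i => piP N q i ν) (Measure.dirac 1) =
      Measure.dirac ((w.map (adjT N)).prod) := by
  obtain ⟨v, hv, hlen⟩ := exists_list_map_adjT_prod_eq (w.map (adjT N)).prod
  have hw : #(w.map (adjT N)).prod.inversions = w.length :=
    le_antisymm (by simpa using card_inversions_mul_prod_adjT_le 1 w) (hlen ▸ hred v hv)
  simpa using foldl_piP_dirac_of_card_inversions hq w 1 (by simpa using hw)

/-- If the word `(i_1, …, i_n)` is reduced, i.e. the permutation
`X = s_{i_1} ∘ ⋯ ∘ s_{i_n}` has Coxeter length `n` (no shorter word of adjacent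
transpositions has product `X`), then applying the operators
`π_{i_1}, …, π_{i_n}` in order to the point mass at the identity yields the
point mass at `X`, regardless of `q`. -/
theorem piP_reduced_word_dirac (q : ℝ≥0) (hq : q ≤ 1) (N : ℕ) (hN : 2 ≤ N)
    (w : List {i : ℕ // 1 ≤ i ∧ i < N})
    (hred : ∀ v : List {i : ℕ // 1 ≤ i ∧ i < N},
      (v.map (adjT N)).prod = (w.map (adjT N)).prod → w.length ≤ v.length) :
    w.foldl (fun ν i => piP N q i ν) (Measure.dirac 1) =
      Measure.dirac ((w.map (adjT N)).prod) :=
  piP_reduced_word_dirac_general q hq N w hred
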